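/- A Lloyd-Topor program Π is tight if and only if there exists a positive integer n such that Π has no chains of length n (Corollary 1). -/

import Mathlib

/- ## First-order logic with named variables -/

namespace LT

/-- A first-order signature: function symbols and predicate symbols with arities. -/
structure Signature where
  Func : Type
  fnArity : Func → ℕ
  Pred : Type
  prArity : Pred → ℕ

/-- First-order terms (variables are natural numbers). -/
inductive Term (σ : Signature) : Type
  | var : ℕ → Term σ
  | func (f : σ.Func) (args : Fin (σ.fnArity f) → Term σ) : Term σ

/-- First-order formulas built from ⊥, atoms, equality, ∧, ∨, →, ∀, ∃. -/
inductive Fml (σ : Signature) : Type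
  | falsum : Fml σ
  | atom (p : σ.Pred) (args : Fin (σ.prArity p) → Term σ) : Fml σ
  | eq (t₁ t₂ : Term σ) : Fml σ
  | and (F G : Fml σ) : Fml σ
  | or (F G : Fml σ) : Fml σ
  | imp (F G : Fml σ) : Fml σ
  | all (n : ℕ) (F : Fml σ) : Fml σ
  | ex (n : ℕ) (F : Fml σ) : Fml σ

variable {σ : Signature}

/-- ¬F is an abbreviation for F → ⊥. -/
def Fml.not (F : Fml σ) : Fml σ := F.imp .falsum

/-- ⊤ stands for ⊥ → ⊥. -/
def Fml.verum : Fml σ := Fml.not .falsum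

/-- F ↔ G stands for (F → G) ∧ (G → F). -/
def Fml.iff (F G : Fml σ) : Fml σ := (F.imp G).and (G.imp F)

/-- A ground atom over a universe `U`: a predicate symbol with a tuple of
universe elements as arguments. -/
abbrev GAtom (σ : Signature) (U : Type) := Σ p : σ.Pred, Fin (σ.prArity p) → U

/-- A first-order interpretation. -/
structure Interp (σ : Signature) where
  U : Type
  nonempty : Nonempty U
  fn (f : σ.Func) : (Fin (σ.fnArity f) → U) → U
  rel : GAtom σ U → Prop

/-- Value of a term under an interpretation and an assignment of variables. -/
def Term.eval (I : Interp σ) (v : ℕ → I.U) : Term σ → I.U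
  | .var n => v n
  | .func f ts => I.fn f fun i => (ts i).eval I v

/-- Tarskian satisfaction. -/
def Fml.Sat (I : Interp σ) (v : ℕ → I.U) : Fml σ → Prop
  | .falsum => False
  | .atom p ts => I.rel ⟨p, fun i => (ts i).eval I v⟩
  | .eq t₁ t₂ => t₁.eval I v = t₂.eval I v
  | .and F G => F.Sat I v ∧ G.Sat I v
  | .or F G => F.Sat I v ∨ G.Sat I v
  | .imp F G => F.Sat I v → G.Sat I v
  | .all n F => ∀ d : I.U, F.Sat I (Function.update v n d)
  | .ex n F => ∃ d : I.U, F.Sat I (Function.update v n d)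

/-- `I` satisfies (the universal closure of) every formula in `Γ`. -/
def Interp.satAll (I : Interp σ) (Γ : Set (Fml σ)) : Prop :=
  ∀ F ∈ Γ, ∀ v : ℕ → I.U, F.Sat I v

/-- The predicate symbols occurring in a formula. -/
def Fml.hasPred : Fml σ → σ.Pred → Prop
  | .falsum, _ => False
  | .atom p _, q => p = q
  | .eq _ _, _ => False
  | .and F G, q => F.hasPred q ∨ G.hasPred q
  | .or F G, q => F.hasPred q ∨ G.hasPred q
  | .imp F G, q => F.hasPred q ∨ G.hasPred q
  | .all _ F, q => F.hasPred q
  | .ex _ F, q => F.hasPred q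

/- ## Lloyd-Topor programs, completion -/

/-- A Lloyd-Topor rule  p(t) ← G. -/
structure Rule (σ : Signature) where
  head : σ.Pred
  args : Fin (σ.prArity head) → Term σ
  body : Fml σ

/-- The rule p(t) ← G read as the formula G → p(t)
(its universal closure is implicit in satisfaction). -/
def Rule.fml (R : Rule σ) : Fml σ := R.body.imp (.atom R.head R.args)

/-- The ground atom obtained by evaluating the head of a rule. -/
def Rule.headEval (R : Rule σ) (I : Interp σ) (v : ℕ → I.U) : GAtom σ I.U :=
  ⟨R.head, fun i => (R.args i).eval I v⟩

/-- The predicate constants occurring in a program. -/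
def progPreds (Pr : List (Rule σ)) : Set σ.Pred :=
  {p | ∃ R ∈ Pr, R.fml.hasPred p}

/-- `I` satisfies the program `Pr`, i.e. the conjunction of the universal
closures of G → p(t) over all rules p(t) ← G of Pr. -/
def Interp.satProg (I : Interp σ) (Pr : List (Rule σ)) : Prop :=
  ∀ R ∈ Pr, ∀ v : ℕ → I.U, R.fml.Sat I v

/-- `I` satisfies Comp[Pr], the conjunction of the completed definitions
∀x(p(x) ↔ ⋁ᵢ ∃yⁱ (x = tⁱ ∧ Gⁱ)) of all predicate constants p of Pr. -/
def Interp.satComp (I : Interp σ) (Pr : List (Rule σ)) : Prop :=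
  ∀ A : GAtom σ I.U, A.1 ∈ progPreds Pr →
    (I.rel A ↔ ∃ R ∈ Pr, ∃ v : ℕ → I.U, R.headEval I v = A ∧ R.body.Sat I v)

/- ## The operator SM -/

/-- Satisfaction of the Ferraris–Lee–Lifschitz transform F*(u), where `u`
reinterprets the intensional predicates `ints`. -/
def Fml.SatStar (I : Interp σ) (ints : Set σ.Pred) (u : GAtom σ I.U → Prop)
    (v : ℕ → I.U) : Fml σ → Prop
  | .falsum => False
  | .atom p ts =>
      (p ∈ ints ∧ u ⟨p, fun i => (ts i).eval I v⟩) ∨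
      (p ∉ ints ∧ I.rel ⟨p, fun i => (ts i).eval I v⟩)
  | .eq t₁ t₂ => t₁.eval I v = t₂.eval I v
  | .and F G => F.SatStar I ints u v ∧ G.SatStar I ints u v
  | .or F G => F.SatStar I ints u v ∨ G.SatStar I ints u v
  | .imp F G => (F.SatStar I ints u v → G.SatStar I ints u v) ∧ (F.Sat I v → G.Sat I v)
  | .all n F => ∀ d : I.U, F.SatStar I ints u (Function.update v n d)
  | .ex n F => ∃ d : I.U, F.SatStar I ints u (Function.update v n d)

/-- u < p : on the intensional predicates, `u` is contained in the relations of
`I` and is not equal to them. -/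
def predLt (I : Interp σ) (ints : Set σ.Pred) (u : GAtom σ I.U → Prop) : Prop :=
  (∀ A : GAtom σ I.U, A.1 ∈ ints → u A → I.rel A) ∧
  ¬ (∀ A : GAtom σ I.U, A.1 ∈ ints → (u A ↔ I.rel A))

/-- `I` satisfies SM[Pr] (with intensional predicates `ints`), for a
Lloyd-Topor program Pr. -/
def Interp.satSM (I : Interp σ) (ints : Set σ.Pred) (Pr : List (Rule σ)) : Prop :=
  I.satProg Pr ∧
  ¬ ∃ u : GAtom σ I.U → Prop, predLt I ints u ∧
      ∀ R ∈ Pr, ∀ v : ℕ → I.U, R.fml.SatStar I ints u v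

/-- The predicate symbols occurring in a set of sentences. -/
def fmlSetPreds (Fs : Set (Fml σ)) : Set σ.Pred := {p | ∃ F ∈ Fs, F.hasPred p}

/-- `I` satisfies SM[F] (with intensional predicates `ints`) where `F` is the
conjunction of the universal closures of the members of `Fs`. -/
def Interp.satSMSet (I : Interp σ) (ints : Set σ.Pred) (Fs : Set (Fml σ)) : Prop :=
  I.satAll Fs ∧
  ¬ ∃ u : GAtom σ I.U → Prop, predLt I ints u ∧
      ∀ F ∈ Fs, ∀ v : ℕ → I.U, F.SatStar I ints u v

/- ## Predicate dependency graph and tightness -/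

mutual
  /-- Predicates with a positive nonnegated occurrence. -/
  def Fml.pnn : Fml σ → Set σ.Pred
    | .falsum => ∅
    | .atom p _ => {p}
    | .eq _ _ => ∅
    | .and F G => F.pnn ∪ G.pnn
    | .or F G => F.pnn ∪ G.pnn
    | .imp _ .falsum => ∅
    | .imp F G => F.nnn ∪ G.pnn
    | .all _ F => F.pnn
    | .ex _ F => F.pnn
  /-- Predicates with a negative nonnegated occurrence. -/
  def Fml.nnn : Fml σ → Set σ.Pred
    | .falsum => ∅
    | .atom _ _ => ∅
    | .eq _ _ => ∅
    | .and F G => F.nnn ∪ G.nnn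
    | .or F G => F.nnn ∪ G.nnn
    | .imp _ .falsum => ∅
    | .imp F G => F.pnn ∪ G.nnn
    | .all _ F => F.nnn
    | .ex _ F => F.nnn
end

/-- Edge of the predicate dependency graph of Pr. -/
def depEdge (Pr : List (Rule σ)) (p q : σ.Pred) : Prop :=
  ∃ R ∈ Pr, R.head = p ∧ q ∈ R.body.pnn

/-- Pr is tight: its predicate dependency graph is acyclic. -/
def Tight (Pr : List (Rule σ)) : Prop :=
  ∀ p : σ.Pred, ¬ Relation.TransGen (depEdge Pr) p p

/- ## Rule dependency graph, chains -/

/-- Renaming of variables in a term. -/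
def Term.rename (ρ : ℕ → ℕ) : Term σ → Term σ
  | .var n => .var (ρ n)
  | .func f ts => .func f fun i => (ts i).rename ρ

/-- Renaming of variables (free and bound) in a formula. -/
def Fml.rename (ρ : ℕ → ℕ) : Fml σ → Fml σ
  | .falsum => .falsum
  | .atom p ts => .atom p fun i => (ts i).rename ρ
  | .eq t₁ t₂ => .eq (t₁.rename ρ) (t₂.rename ρ)
  | .and F G => .and (F.rename ρ) (G.rename ρ)
  | .or F G => .or (F.rename ρ) (G.rename ρ)
  | .imp F G => .imp (F.rename ρ) (G.rename ρ)
  | .all n F => .all (ρ n) (F.rename ρ)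
  | .ex n F => .ex (ρ n) (F.rename ρ)

/-- Renaming of variables in a rule. -/
def Rule.rename (ρ : ℕ → ℕ) (R : Rule σ) : Rule σ :=
  ⟨R.head, fun i => (R.args i).rename ρ, R.body.rename ρ⟩

/-- Vertices of the rule dependency graph of Pr: rules of Pr with variables
(both free and bound) renamed arbitrarily. -/
def isVariant (Pr : List (Rule σ)) (R' : Rule σ) : Prop :=
  ∃ R ∈ Pr, ∃ ρ : ℕ → ℕ, Function.Injective ρ ∧ R' = R.rename ρ

/-- A (syntactic) atomic formula p(s). -/
abbrev TAtom (σ : Signature) := Σ p : σ.Pred, Fin (σ.prArity p) → Term σ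

mutual
  /-- Atomic formulas with a positive nonnegated occurrence. -/
  def Fml.pnnAtoms : Fml σ → Set (TAtom σ)
    | .falsum => ∅
    | .atom p ts => {⟨p, ts⟩}
    | .eq _ _ => ∅
    | .and F G => F.pnnAtoms ∪ G.pnnAtoms
    | .or F G => F.pnnAtoms ∪ G.pnnAtoms
    | .imp _ .falsum => ∅
    | .imp F G => F.nnnAtoms ∪ G.pnnAtoms
    | .all _ F => F.pnnAtoms
    | .ex _ F => F.pnnAtoms
  /-- Atomic formulas with a negative nonnegated occurrence. -/
  def Fml.nnnAtoms : Fml σ → Set (TAtom σ)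
    | .falsum => ∅
    | .atom _ _ => ∅
    | .eq _ _ => ∅
    | .and F G => F.nnnAtoms ∪ G.nnnAtoms
    | .or F G => F.nnnAtoms ∪ G.nnnAtoms
    | .imp _ .falsum => ∅
    | .imp F G => F.pnnAtoms ∪ G.nnnAtoms
    | .all _ F => F.nnnAtoms
    | .ex _ F => F.nnnAtoms
end

/-- Candidate path of length `n` in the rule dependency graph: rules
R₀,...,Rₙ and edge labels A₁,...,Aₙ. -/
structure RdgPath (σ : Signature) (n : ℕ) where
  rules : Fin (n + 1) → Rule σ
  labels : Fin n → TAtom σ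

/-- `C` is a path of length `n` in the rule dependency graph of Pr: all of its
rules are variants of rules of Pr, and for each i the labelled atom p'(s) has a
positive nonnegated occurrence in the body of the source rule and p' is the
head predicate of the target rule. -/
def RdgPath.valid {n : ℕ} (C : RdgPath σ n) (Pr : List (Rule σ)) : Prop :=
  (∀ i, isVariant Pr (C.rules i)) ∧
  ∀ i : Fin n,
    C.labels i ∈ (C.rules i.castSucc).body.pnnAtoms ∧
    (C.rules i.succ).head = (C.labels i).1

/-- Variables (free and bound) of a term. -/
def Term.vars : Term σ → Set ℕ
  | .var n => {n}
  | .func _ ts => ⋃ i, (ts i).vars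

/-- Variables (free and bound) of a formula. -/
def Fml.vars : Fml σ → Set ℕ
  | .falsum => ∅
  | .atom _ ts => ⋃ i, (ts i).vars
  | .eq t₁ t₂ => t₁.vars ∪ t₂.vars
  | .and F G => F.vars ∪ G.vars
  | .or F G => F.vars ∪ G.vars
  | .imp F G => F.vars ∪ G.vars
  | .all n F => insert n F.vars
  | .ex n F => insert n F.vars

/-- Variables (free and bound) of a rule. -/
def Rule.vars (R : Rule σ) : Set ℕ := (⋃ i, (R.args i).vars) ∪ R.body.vars

/-- A chain: a path in the rule dependency graph whose rules pairwise have no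
common variables. -/
def RdgPath.isChain {n : ℕ} (C : RdgPath σ n) (Pr : List (Rule σ)) : Prop :=
  C.valid Pr ∧ ∀ i j, i ≠ j → Disjoint (C.rules i).vars (C.rules j).vars

/-- Satisfaction of the chain formula
F_C = ⋀_{i=1}^n (sⁱ = tⁱ) ∧ ⋀_{i=0}^n Bodyᵢ. -/
def RdgPath.satChainFml {n : ℕ} (C : RdgPath σ n) (I : Interp σ) (v : ℕ → I.U) : Prop :=
  (∀ i : Fin n,
    (⟨(C.labels i).1, fun j => ((C.labels i).2 j).eval I v⟩ : GAtom σ I.U) =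
      (C.rules i.succ).headEval I v) ∧
  ∀ i : Fin (n + 1), (C.rules i).body.Sat I v

/-- Pr is Γ-tight: for some positive n, for every chain C of length n,
Γ together with Comp[Pr] entails the universal closure of ¬F_C. -/
def GammaTight (Γ : Set (Fml σ)) (Pr : List (Rule σ)) : Prop :=
  ∃ n : ℕ, 0 < n ∧ ∀ C : RdgPath σ n, C.isChain Pr →
    ∀ I : Interp σ, I.satAll Γ → I.satComp Pr → ∀ v : ℕ → I.U, ¬ C.satChainFml I v

/- ## Infinitary propositional formulas -/

/-- Infinitary propositional formulas over a set `α` of atoms, with arbitrary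
(indexed) conjunctions and disjunctions. -/
inductive IFml (α : Type) : Type 1
  | atom : α → IFml α
  | falsum : IFml α
  | conj {ι : Type} (f : ι → IFml α) : IFml α
  | disj {ι : Type} (f : ι → IFml α) : IFml α
  | imp (F G : IFml α) : IFml α

variable {α : Type}

/-- Satisfaction of an infinitary formula by a propositional interpretation
(a set of atoms). -/
def IFml.ISat (J : Set α) : IFml α → Prop
  | .atom a => a ∈ J
  | .falsum => False
  | .conj f => ∀ i, (f i).ISat J
  | .disj f => ∃ i, (f i).ISat J
  | .imp F G => F.ISat J → G.ISat J

attribute [local instance] Classical.propDecidable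

/-- The reduct F^J of an infinitary formula. -/
noncomputable def IFml.reduct (J : Set α) : IFml α → IFml α
  | .atom a => if a ∈ J then .atom a else .falsum
  | .falsum => .falsum
  | .conj f => if (IFml.conj f).ISat J then .conj (fun i => (f i).reduct J) else .falsum
  | .disj f => if (IFml.disj f).ISat J then .disj (fun i => (f i).reduct J) else .falsum
  | .imp F G => if (IFml.imp F G).ISat J then .imp (F.reduct J) (G.reduct J) else .falsum

/-- `J` is a stable model of `F`: `J` is a minimal model of the reduct F^J. -/
def IFml.isStableModel (J : Set α) (F : IFml α) : Prop :=
  (F.reduct J).ISat J ∧ ∀ K : Set α, K ⊆ J → (F.reduct J).ISat K → K = J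

/-- An infinitary program: an (indexed) collection of rules A ← G with
A an atom and G an infinitary formula. -/
structure IProg (α : Type) where
  idx : Type
  head : idx → α
  body : idx → IFml α

/-- The infinitary program as an infinitary formula: the conjunction of the
implications G → A over all its rules A ← G. -/
def IProg.fml (P : IProg α) : IFml α := .conj fun i => (P.body i).imp (.atom (P.head i))

/-- `J` is supported by `P`: every atom of `J` is the head of a rule whose
body is satisfied by `J`. -/
def IProg.supported (P : IProg α) (J : Set α) : Prop :=
  ∀ a ∈ J, ∃ i, P.head i = a ∧ (P.body i).ISat J

mutual
  /-- Positive nonnegated atoms of an infinitary formula. -/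
  def IFml.Pnn : IFml α → Set α
    | .atom a => {a}
    | .falsum => ∅
    | .conj f => ⋃ i, (f i).Pnn
    | .disj f => ⋃ i, (f i).Pnn
    | .imp _ .falsum => ∅
    | .imp F G => F.Nnn ∪ G.Pnn
  /-- Negative nonnegated atoms of an infinitary formula. -/
  def IFml.Nnn : IFml α → Set α
    | .atom _ => ∅
    | .falsum => ∅
    | .conj f => ⋃ i, (f i).Nnn
    | .disj f => ⋃ i, (f i).Nnn
    | .imp _ .falsum => ∅
    | .imp F G => F.Pnn ∪ G.Nnn
end

/-- `a'` is a parent of `a` relative to `P` and `J`. -/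
def IProg.parent (P : IProg α) (J : Set α) (a' a : α) : Prop :=
  a ∈ J ∧ a' ∈ J ∧ ∃ i, P.head i = a ∧ (P.body i).ISat J ∧ a' ∈ (P.body i).Pnn

/-- `P` is tight on `J`: there is no infinite sequence A₀, A₁, ... of elements
of `J` in which each A_{i+1} is a parent of A_i. -/
def IProg.tightOn (P : IProg α) (J : Set α) : Prop :=
  ¬ ∃ A : ℕ → α, (∀ n, A n ∈ J) ∧ ∀ n, P.parent J (A (n + 1)) (A n)

/- ## Grounding -/

/-- The grounding gr_I(F) of a first-order formula relative to an
interpretation `I` (and an assignment `v` for the free variables). -/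
noncomputable def Fml.ground (I : Interp σ) (v : ℕ → I.U) : Fml σ → IFml (GAtom σ I.U)
  | .falsum => .falsum
  | .atom p ts => .atom ⟨p, fun i => (ts i).eval I v⟩
  | .eq t₁ t₂ => if t₁.eval I v = t₂.eval I v then .imp .falsum .falsum else .falsum
  | .and F G => .conj fun b : Bool => cond b (F.ground I v) (G.ground I v)
  | .or F G => .disj fun b : Bool => cond b (F.ground I v) (G.ground I v)
  | .imp F G => .imp (F.ground I v) (G.ground I v)
  | .all n F => .conj fun d : I.U => F.ground I (Function.update v n d)
  | .ex n F => .disj fun d : I.U => F.ground I (Function.update v n d)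

/-- I^r : the set of ground atoms satisfied by `I`. -/
def Interp.ir (I : Interp σ) : Set (GAtom σ I.U) := {A | I.rel A}

/-- The infinitary program gr_I(Pr) obtained by grounding a Lloyd-Topor
program: one ground rule for every rule of Pr and every assignment. -/
noncomputable def groundProg (I : Interp σ) (Pr : List (Rule σ)) : IProg (GAtom σ I.U) where
  idx := {R : Rule σ // R ∈ Pr} × (ℕ → I.U)
  head := fun x => (x.1.1).headEval I x.2
  body := fun x => (x.1.1).body.ground I x.2

/-- Free variables of a formula. -/
def Fml.freeVars : Fml σ → Set ℕ
  | .falsum => ∅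
  | .atom _ ts => ⋃ i, (ts i).vars
  | .eq t₁ t₂ => t₁.vars ∪ t₂.vars
  | .and F G => F.freeVars ∪ G.freeVars
  | .or F G => F.freeVars ∪ G.freeVars
  | .imp F G => F.freeVars ∪ G.freeVars
  | .all n F => F.freeVars \ {n}
  | .ex n F => F.freeVars \ {n}

section Lemmas
variable {σ : Signature}

theorem Fml.pnn_imp (F G : Fml σ) (h : G ≠ .falsum) :
    (F.imp G).pnn = F.nnn ∪ G.pnn := by
  cases G <;> first | exact absurd rfl h | rfl

theorem Fml.nnn_imp (F G : Fml σ) (h : G ≠ .falsum) :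
    (F.imp G).nnn = F.pnn ∪ G.nnn := by
  cases G <;> first | exact absurd rfl h | rfl

theorem Fml.pnnAtoms_imp (F G : Fml σ) (h : G ≠ .falsum) :
    (F.imp G).pnnAtoms = F.nnnAtoms ∪ G.pnnAtoms := by
  cases G <;> first | exact absurd rfl h | rfl

theorem Fml.nnnAtoms_imp (F G : Fml σ) (h : G ≠ .falsum) :
    (F.imp G).nnnAtoms = F.pnnAtoms ∪ G.nnnAtoms := by
  cases G <;> first | exact absurd rfl h | rfl

theorem Fml.rename_eq_falsum {ρ : ℕ → ℕ} {F : Fml σ} :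
    F.rename ρ = .falsum ↔ F = .falsum := by
  cases F <;> simp [Fml.rename]

theorem Fml.pnn_nnn_rename (ρ : ℕ → ℕ) : ∀ F : Fml σ,
    (F.rename ρ).pnn = F.pnn ∧ (F.rename ρ).nnn = F.nnn := by
  intro F
  induction F with
  | falsum => exact ⟨rfl, rfl⟩
  | atom p ts => exact ⟨rfl, rfl⟩
  | eq t₁ t₂ => exact ⟨rfl, rfl⟩
  | and F G ihF ihG =>
      exact ⟨by show (F.rename ρ).pnn ∪ (G.rename ρ).pnn = F.pnn ∪ G.pnn;
                rw [ihF.1, ihG.1],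
             by show (F.rename ρ).nnn ∪ (G.rename ρ).nnn = F.nnn ∪ G.nnn;
                rw [ihF.2, ihG.2]⟩
  | or F G ihF ihG =>
      exact ⟨by show (F.rename ρ).pnn ∪ (G.rename ρ).pnn = F.pnn ∪ G.pnn;
                rw [ihF.1, ihG.1],
             by show (F.rename ρ).nnn ∪ (G.rename ρ).nnn = F.nnn ∪ G.nnn;
                rw [ihF.2, ihG.2]⟩
  | imp F G ihF ihG =>
      by_cases h : G = .falsum
      · subst h; exact ⟨rfl, rfl⟩
      · have h' : G.rename ρ ≠ .falsum := fun hh => h (Fml.rename_eq_falsum.mp hh)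
        constructor
        · show ((F.rename ρ).imp (G.rename ρ)).pnn = _
          rw [Fml.pnn_imp _ _ h', Fml.pnn_imp _ _ h, ihF.2, ihG.1]
        · show ((F.rename ρ).imp (G.rename ρ)).nnn = _
          rw [Fml.nnn_imp _ _ h', Fml.nnn_imp _ _ h, ihF.1, ihG.2]
  | all n F ih => exact ih
  | ex n F ih => exact ih

/-- Renaming a positive nonnegated atom. -/
theorem Fml.pnnAtoms_rename (ρ : ℕ → ℕ) : ∀ F : Fml σ,
    (∀ A ∈ F.pnnAtoms,
      (⟨A.1, fun i => (A.2 i).rename ρ⟩ : TAtom σ) ∈ (F.rename ρ).pnnAtoms) ∧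
    (∀ A ∈ F.nnnAtoms,
      (⟨A.1, fun i => (A.2 i).rename ρ⟩ : TAtom σ) ∈ (F.rename ρ).nnnAtoms) := by
  intro F
  induction F with
  | falsum => exact ⟨fun A h => h.elim, fun A h => h.elim⟩
  | atom p ts =>
      refine ⟨fun A h => ?_, fun A h => h.elim⟩
      rcases h with rfl
      exact rfl
  | eq t₁ t₂ => exact ⟨fun A h => h.elim, fun A h => h.elim⟩
  | and F G ihF ihG =>
      exact ⟨fun A h => h.elim (fun h => Or.inl (ihF.1 A h)) (fun h => Or.inr (ihG.1 A h)),
             fun A h => h.elim (fun h => Or.inl (ihF.2 A h)) (fun h => Or.inr (ihG.2 A h))⟩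
  | or F G ihF ihG =>
      exact ⟨fun A h => h.elim (fun h => Or.inl (ihF.1 A h)) (fun h => Or.inr (ihG.1 A h)),
             fun A h => h.elim (fun h => Or.inl (ihF.2 A h)) (fun h => Or.inr (ihG.2 A h))⟩
  | imp F G ihF ihG =>
      by_cases h : G = .falsum
      · subst h; exact ⟨fun A h => h.elim, fun A h => h.elim⟩
      · have h' : G.rename ρ ≠ .falsum := fun hh => h (Fml.rename_eq_falsum.mp hh)
        constructor
        · intro A hA
          rw [Fml.pnnAtoms_imp _ _ h] at hA
          show _ ∈ ((F.rename ρ).imp (G.rename ρ)).pnnAtoms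
          rw [Fml.pnnAtoms_imp _ _ h']
          exact hA.elim (fun h => Or.inl (ihF.2 A h)) (fun h => Or.inr (ihG.1 A h))
        · intro A hA
          rw [Fml.nnnAtoms_imp _ _ h] at hA
          show _ ∈ ((F.rename ρ).imp (G.rename ρ)).nnnAtoms
          rw [Fml.nnnAtoms_imp _ _ h']
          exact hA.elim (fun h => Or.inl (ihF.1 A h)) (fun h => Or.inr (ihG.2 A h))
  | all n F ih => exact ih
  | ex n F ih => exact ih

/-- pnn is the set of head predicates of pnnAtoms. -/
theorem Fml.pnn_eq_image : ∀ F : Fml σ,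
    F.pnn = Sigma.fst '' F.pnnAtoms ∧ F.nnn = Sigma.fst '' F.nnnAtoms := by
  intro F
  induction F with
  | falsum => simp [Fml.pnn, Fml.nnn, Fml.pnnAtoms, Fml.nnnAtoms]
  | atom p ts =>
      constructor
      · show ({p} : Set σ.Pred) = Sigma.fst '' {(⟨p, ts⟩ : TAtom σ)}
        simp
      · show (∅ : Set σ.Pred) = Sigma.fst '' (∅ : Set (TAtom σ))
        simp
  | eq t₁ t₂ => exact ⟨by simp [show (Fml.eq t₁ t₂ : Fml σ).pnn = ∅ from rfl,
                              show (Fml.eq t₁ t₂ : Fml σ).pnnAtoms = ∅ from rfl],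
                       by simp [show (Fml.eq t₁ t₂ : Fml σ).nnn = ∅ from rfl,
                              show (Fml.eq t₁ t₂ : Fml σ).nnnAtoms = ∅ from rfl]⟩
  | and F G ihF ihG =>
      exact ⟨by show F.pnn ∪ G.pnn = Sigma.fst '' (F.pnnAtoms ∪ G.pnnAtoms);
                rw [Set.image_union, ihF.1, ihG.1],
             by show F.nnn ∪ G.nnn = Sigma.fst '' (F.nnnAtoms ∪ G.nnnAtoms);
                rw [Set.image_union, ihF.2, ihG.2]⟩
  | or F G ihF ihG =>
      exact ⟨by show F.pnn ∪ G.pnn = Sigma.fst '' (F.pnnAtoms ∪ G.pnnAtoms);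
                rw [Set.image_union, ihF.1, ihG.1],
             by show F.nnn ∪ G.nnn = Sigma.fst '' (F.nnnAtoms ∪ G.nnnAtoms);
                rw [Set.image_union, ihF.2, ihG.2]⟩
  | imp F G ihF ihG =>
      by_cases h : G = .falsum
      · subst h
        constructor
        · show (∅ : Set σ.Pred) = Sigma.fst '' (∅ : Set (TAtom σ)); simp
        · show (∅ : Set σ.Pred) = Sigma.fst '' (∅ : Set (TAtom σ)); simp
      · constructor
        · rw [Fml.pnn_imp _ _ h, Fml.pnnAtoms_imp _ _ h, Set.image_union, ihF.2, ihG.1]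
        · rw [Fml.nnn_imp _ _ h, Fml.nnnAtoms_imp _ _ h, Set.image_union, ihF.1, ihG.2]
  | all n F ih => exact ih
  | ex n F ih => exact ih


theorem Term.vars_rename (ρ : ℕ → ℕ) : ∀ t : Term σ, (t.rename ρ).vars ⊆ Set.range ρ
  | .var n => by simp [Term.rename, Term.vars]
  | .func f ts => by
      show (⋃ i, ((ts i).rename ρ).vars) ⊆ _
      exact Set.iUnion_subset fun i => Term.vars_rename ρ (ts i)

theorem Fml.vars_rename (ρ : ℕ → ℕ) : ∀ F : Fml σ, (F.rename ρ).vars ⊆ Set.range ρ := by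
  intro F
  induction F with
  | falsum => exact Set.empty_subset _
  | atom p ts =>
      show (⋃ i, ((ts i).rename ρ).vars) ⊆ _
      exact Set.iUnion_subset fun i => Term.vars_rename ρ (ts i)
  | eq t₁ t₂ => exact Set.union_subset (Term.vars_rename ρ t₁) (Term.vars_rename ρ t₂)
  | and F G ihF ihG => exact Set.union_subset ihF ihG
  | or F G ihF ihG => exact Set.union_subset ihF ihG
  | imp F G ihF ihG => exact Set.union_subset ihF ihG
  | all m F ih => exact Set.insert_subset ⟨m, rfl⟩ ih
  | ex m F ih => exact Set.insert_subset ⟨m, rfl⟩ ih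

theorem Rule.vars_rename (ρ : ℕ → ℕ) (R : Rule σ) :
    (R.rename ρ).vars ⊆ Set.range ρ := by
  refine Set.union_subset ?_ (Fml.vars_rename ρ R.body)
  exact Set.iUnion_subset fun i => Term.vars_rename ρ (R.args i)

/-- A chain edge gives a predicate dependency edge between head predicates. -/
theorem chain_edge {n : ℕ} {C : RdgPath σ n} {Pr : List (Rule σ)}
    (h : C.valid Pr) (k : Fin n) :
    depEdge Pr (C.rules k.castSucc).head (C.rules k.succ).head := by
  obtain ⟨R, hR, ρ, hρ, hEq⟩ := h.1 k.castSucc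
  refine ⟨R, hR, ?_, ?_⟩
  · rw [hEq]; rfl
  · have hmem := (h.2 k).1
    rw [hEq] at hmem
    have h1 : (C.labels k).1 ∈ (R.body.rename ρ).pnn := by
      rw [(Fml.pnn_eq_image _).1]
      exact ⟨C.labels k, hmem, rfl⟩
    rw [(Fml.pnn_nnn_rename ρ R.body).1] at h1
    rw [(h.2 k).2]
    exact h1

theorem transGen_seq {α : Type} {r : α → α → Prop} {a b : α}
    (h : Relation.TransGen r a b) :
    ∃ m : ℕ, ∃ f : ℕ → α, f 0 = a ∧ f (m + 1) = b ∧ ∀ i ≤ m, r (f i) (f (i + 1)) := by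
  induction h with
  | @single b hr =>
      refine ⟨0, fun i => if i = 0 then a else b, rfl, rfl, ?_⟩
      intro i hi
      interval_cases i
      simpa using hr
  | @tail b c h1 hr ih =>
      obtain ⟨m, f, hf0, hfm, hstep⟩ := ih
      refine ⟨m + 1, fun i => if i ≤ m + 1 then f i else c, by simpa using hf0, by simp, ?_⟩
      intro i hi
      rcases Nat.lt_or_ge i (m + 1) with h' | h'
      · simpa [Nat.le_of_lt h', Nat.succ_le_of_lt h'] using hstep i (by omega)
      · have : i = m + 1 := by omega
        subst this
        simpa [hfm] using hr
end Lemmas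

theorem tight_no_chain {σ : Signature} (Pr : List (Rule σ)) (hT : Tight Pr)
    {n : ℕ} (hn : n = Pr.length + 1) (C : RdgPath σ n) (hC : C.isChain Pr) : False := by
  · -- tight → no long chains
    -- all head predicates of the chain lie in the finite set of heads of Pr
    have hmap : ∀ i : Fin (n + 1), (C.rules i).head ∈ (Pr.map Rule.head).toFinset := by
      intro i
      obtain ⟨R, hR, ρ, hρ, hEq⟩ := hC.1.1 i
      rw [hEq]
      show R.head ∈ _
      rw [List.mem_toFinset]
      exact List.mem_map.mpr ⟨R, hR, rfl⟩
    have hcard : (Pr.map Rule.head).toFinset.card < (Finset.univ : Finset (Fin (n + 1))).card := by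
      calc (Pr.map Rule.head).toFinset.card ≤ (Pr.map Rule.head).length :=
            List.toFinset_card_le _
        _ = Pr.length := List.length_map _
        _ < n + 1 := by omega
        _ = (Finset.univ : Finset (Fin (n + 1))).card := by simp
    obtain ⟨i, -, j, -, hij, heq⟩ :=
      Finset.exists_ne_map_eq_of_card_lt_of_maps_to hcard
        (fun i (_ : i ∈ Finset.univ) => hmap i)
    -- the heads form a walk in the dependency graph
    have hnn : ∀ m : ℕ, min m n < n + 1 := fun m => by omega
    set H : ℕ → σ.Pred := fun m => (C.rules ⟨min m n, hnn m⟩).head with hH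
    have edge : ∀ m, m < n → depEdge Pr (H m) (H (m + 1)) := by
      intro m hm
      have h1 : (⟨min m n, hnn m⟩ : Fin (n + 1)) = Fin.castSucc ⟨m, hm⟩ :=
        Fin.ext (by simp only [Fin.coe_castSucc]; omega)
      have h2 : (⟨min (m + 1) n, hnn (m + 1)⟩ : Fin (n + 1)) = Fin.succ ⟨m, hm⟩ :=
        Fin.ext (by simp only [Fin.val_succ]; omega)
      show depEdge Pr (C.rules _).head (C.rules _).head
      rw [h1, h2]
      exact chain_edge hC.1 ⟨m, hm⟩
    have key : ∀ b a : ℕ, a < b → b ≤ n → Relation.TransGen (depEdge Pr) (H a) (H b) := by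
      intro b
      induction b with
      | zero => intro a h _; omega
      | succ b ih =>
          intro a hab hbn
          rcases Nat.lt_or_ge a b with h' | h'
          · exact (ih a h' (by omega)).tail (edge b (by omega))
          · have : a = b := by omega
            subst this
            exact Relation.TransGen.single (edge a (by omega))
    have hHval : ∀ i : Fin (n + 1), H i.val = (C.rules i).head := by
      intro i
      have h1 : (⟨min i.val n, hnn i.val⟩ : Fin (n + 1)) = i :=
        Fin.ext (by have := i.isLt; show min i.val n = i.val; omega)
      show (C.rules ⟨min i.val n, hnn i.val⟩).head = _
      rw [h1]
    have main : ∀ i j : Fin (n + 1), i < j → (C.rules i).head = (C.rules j).head → False := by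
      intro i j hlt he
      have := key j.val i.val (Fin.lt_iff_val_lt_val.mp hlt) (by omega)
      rw [hHval i, hHval j, he] at this
      exact hT _ this
    rcases Ne.lt_or_gt hij with h | h
    · exact main i j h heq
    · exact main j i h heq.symm

theorem corollary1' {σ : Signature} (Pr : List (Rule σ)) :
    Tight Pr ↔ ∃ n : ℕ, 0 < n ∧ ∀ C : RdgPath σ n, ¬ C.isChain Pr := by
  constructor
  · intro hT
    exact ⟨Pr.length + 1, Nat.succ_pos _, fun C hC => tight_no_chain Pr hT rfl C hC⟩
  · -- no chains of some length → tight
    rintro ⟨n, hn, hno⟩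
    intro p hcyc
    obtain ⟨m, f, hf0, hfm, hstep⟩ := transGen_seq hcyc
    -- extend f periodically
    set g : ℕ → σ.Pred := fun i => f (i % (m + 1)) with hg
    have hgstep : ∀ i : ℕ, depEdge Pr (g i) (g (i + 1)) := by
      intro i
      have hk : i % (m + 1) ≤ m := by
        have := Nat.mod_lt i (show 0 < m + 1 by omega); omega
      have hnext : g (i + 1) = f (i % (m + 1) + 1) := by
        have hdm := Nat.div_add_mod i (m + 1)
        rcases Nat.lt_or_ge (i % (m + 1)) m with h' | h'
        · have : (i + 1) % (m + 1) = i % (m + 1) + 1 := by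
            conv_lhs => rw [show i + 1 = (m + 1) * (i / (m + 1)) + (i % (m + 1) + 1) by omega]
            rw [Nat.mul_add_mod]
            exact Nat.mod_eq_of_lt (by omega)
          simp only [hg, this]
        · have hkm : i % (m + 1) = m := by omega
          have : (i + 1) % (m + 1) = 0 := by
            have h2 : i + 1 = (m + 1) * (i / (m + 1) + 1) := by rw [Nat.mul_succ]; omega
            rw [h2]; exact Nat.mul_mod_right _ _
          simp only [hg, this, hkm, hf0, hfm.trans hf0.symm]
      have := hstep (i % (m + 1)) hk
      rw [hnext]
      exact this
    -- choose rules and witness atoms along the walk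
    have hch : ∀ i : ℕ, ∃ R, R ∈ Pr ∧ R.head = g i ∧
        ∃ ts : Fin (σ.prArity (g (i + 1))) → Term σ,
          (⟨g (i + 1), ts⟩ : TAtom σ) ∈ R.body.pnnAtoms := by
      intro i
      obtain ⟨R, hR, hhead, hpnn⟩ := hgstep i
      rw [(Fml.pnn_eq_image R.body).1] at hpnn
      obtain ⟨⟨q, ts⟩, hA, rfl⟩ := hpnn
      exact ⟨R, hR, hhead, ts, hA⟩
    choose R hRmem hRhead ts hts using hch
    -- build the chain of length n
    set ρ : ℕ → ℕ → ℕ := fun j k => Nat.pair j k with hρ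
    have hρinj : ∀ j, Function.Injective (ρ j) := by
      intro j a b hab
      have := Nat.pair_eq_pair.mp hab
      exact this.2
    set C : RdgPath σ n :=
      ⟨fun j => (R j.val).rename (ρ j.val),
       fun j => ⟨g (j.val + 1), fun i => (ts j.val i).rename (ρ j.val)⟩⟩ with hC
    refine hno C ⟨⟨fun i => ⟨R i.val, hRmem _, ρ i.val, hρinj _, rfl⟩, ?_⟩, ?_⟩
    · intro j
      constructor
      · have := (Fml.pnnAtoms_rename (ρ j.val) (R j.val).body).1 _ (hts j.val)
        exact this
      · show (R (j.succ.val)).head = g (j.val + 1)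
        rw [hRhead, Fin.val_succ]
    · intro i j hij
      rw [Set.disjoint_left]
      intro x hxi hxj
      obtain ⟨a, ha⟩ := Rule.vars_rename (ρ i.val) (R i.val) hxi
      obtain ⟨b, hb⟩ := Rule.vars_rename (ρ j.val) (R j.val) hxj
      have : i.val = j.val := (Nat.pair_eq_pair.mp (ha.trans hb.symm)).1
      exact hij (Fin.ext this)
/-- **Corollary 1.** A Lloyd-Topor program is tight iff for some positive n it
has no chains of length n. -/
theorem corollary1 {σ : Signature} (Pr : List (Rule σ)) :
    Tight Pr ↔ ∃ n : ℕ, 0 < n ∧ ∀ C : RdgPath σ n, ¬ C.isChain Pr := by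
  exact corollary1' Pr

end LT
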